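/- Let X be a first countable Hausdorff space admitting a non-trivial convergent sequence (a sequence converging to ℓ with all terms distinct from ℓ), and let φ be a lower semicontinuous submeasure with φ(ℕ) < ∞. Suppose there exists a partition {A_n : n ∈ ℕ} of ℕ with ‖A_n‖_φ > 0 for all n and lim_n ‖⋃_{k>n} A_k‖_φ = 0. Then there exists a sequence x in X whose set of I_φ-limit points is not closed. -/

import Mathlib

open Filter Topology Set
open scoped ENNReal

/-- An ideal on ℕ: contains all finite sets, closed under subsets and finite
unions, and proper. -/
def IsIdeal (I : Set (Set ℕ)) : Prop :=
  (∀ A : Set ℕ, A.Finite → A ∈ I) ∧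
  (∀ A B : Set ℕ, A ⊆ B → B ∈ I → A ∈ I) ∧
  (∀ A B : Set ℕ, A ∈ I → B ∈ I → A ∪ B ∈ I) ∧
  (Set.univ : Set ℕ) ∉ I

/-- `ℓ` is an `I`-limit point of `x`: some subsequence indexed by a set not in
`I` converges to `ℓ`. -/
def ILimitPoint {X : Type*} [TopologicalSpace X] (I : Set (Set ℕ)) (x : ℕ → X) (ℓ : X) : Prop :=
  ∃ A : Set ℕ, A ∉ I ∧ Tendsto x (atTop ⊓ 𝓟 A) (𝓝 ℓ)

/-- `ℓ` is an `I`-cluster point of `x`. -/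
def IClusterPoint {X : Type*} [TopologicalSpace X] (I : Set (Set ℕ)) (x : ℕ → X) (ℓ : X) : Prop :=
  ∀ U ∈ 𝓝 ℓ, {n | x n ∈ U} ∉ I

/-- A lower semicontinuous submeasure on ℕ. -/
def IsLSCSubmeasure (φ : Set ℕ → ℝ≥0∞) : Prop :=
  φ ∅ = 0 ∧ (∀ A B : Set ℕ, A ⊆ B → φ A ≤ φ B) ∧
  (∀ A B : Set ℕ, φ (A ∪ B) ≤ φ A + φ B) ∧
  (∀ A : Set ℕ, Tendsto (fun n => φ (A ∩ Set.Iio n)) atTop (𝓝 (φ A)))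

/-- `‖A‖_φ = lim_n φ(A \ {0,…,n-1})`, the limit of an antitone sequence,
realized as an infimum. -/
noncomputable def phiNorm (φ : Set ℕ → ℝ≥0∞) (A : Set ℕ) : ℝ≥0∞ :=
  ⨅ n : ℕ, φ (A \ Set.Iio n)

/-- The ideal of sets of asymptotic density zero. -/
def I0 : Set (Set ℕ) :=
  {S : Set ℕ | Tendsto (fun n => (Nat.card ↥(S ∩ Set.Iio n) : ℝ) / n) atTop (𝓝 0)}

/-- `u(ℓ) := lim_k ‖{n : x n ∈ U_k}‖_φ` along a decreasing local base at `ℓ`;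
its value is independent of the base and equals the infimum over all
neighborhoods. -/
noncomputable def uFun {X : Type*} [TopologicalSpace X] (φ : Set ℕ → ℝ≥0∞)
    (x : ℕ → X) (ℓ : X) : ℝ≥0∞ :=
  ⨅ U ∈ 𝓝 ℓ, phiNorm φ {n | x n ∈ U}

/-- Isolated points of a set. -/
def isolatedPts {X : Type*} [TopologicalSpace X] (B : Set X) : Set X :=
  {b ∈ B | ∃ U ∈ 𝓝 b, U ∩ B = {b}}

/-!
Spread a non-trivial convergent sequence `y n → ℓ` over the partition: put `x m = y n` for
`m ∈ P n`. Each `y n` is an `I_φ`-limit point of `x` (along `P n`), so `ℓ` lies in the closure of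
the set of limit points. It is not a limit point itself: a set `A` with `‖A‖_φ > 0` meets some
block `P k` in infinitely many indices, since the tail `⋃_{k>N} P k` has small norm and finite sets
have norm `0`; along those indices `x` is the constant `y k ≠ ℓ`.
-/

section phiNorm

variable {φ : Set ℕ → ℝ≥0∞}

lemma phiNorm_mono (hφ : IsLSCSubmeasure φ) {A B : Set ℕ} (h : A ⊆ B) :
    phiNorm φ A ≤ phiNorm φ B :=
  iInf_mono fun _ => hφ.2.1 _ _ (sdiff_subset_sdiff_left h)

lemma phiNorm_eq_zero_of_finite (hφ : IsLSCSubmeasure φ) {A : Set ℕ} (h : A.Finite) :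
    phiNorm φ A = 0 := by
  obtain ⟨N, hN⟩ := h.bddAbove
  have hempty : A \ Iio (N + 1) = ∅ :=
    sdiff_eq_empty.mpr fun m hm => Nat.lt_succ_of_le (hN hm)
  exact le_antisymm ((iInf_le _ (N + 1)).trans_eq (by rw [hempty, hφ.1])) zero_le

lemma phiNorm_le_inter_add_diff (hφ : IsLSCSubmeasure φ) (A B : Set ℕ) :
    phiNorm φ A ≤ phiNorm φ (A ∩ B) + phiNorm φ (A \ B) := by
  simp only [phiNorm, ENNReal.iInf_add, ENNReal.add_iInf]
  refine le_iInf₂ fun m n => ?_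
  calc ⨅ k, φ (A \ Iio k) ≤ φ (A \ Iio (max n m)) := iInf_le _ _
    _ ≤ φ ((A ∩ B) \ Iio n ∪ (A \ B) \ Iio m) := by
        refine hφ.2.1 _ _ fun a ⟨haA, ha⟩ => ?_
        simp only [mem_Iio, not_lt, max_le_iff] at ha
        by_cases hb : a ∈ B
        · exact Or.inl ⟨⟨haA, hb⟩, not_lt.mpr ha.1⟩
        · exact Or.inr ⟨⟨haA, hb⟩, not_lt.mpr ha.2⟩
    _ ≤ _ := hφ.2.2.1 _ _

lemma phiNorm_le_diff_of_finite_inter (hφ : IsLSCSubmeasure φ) {A B : Set ℕ}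
    (h : (A ∩ B).Finite) : phiNorm φ A ≤ phiNorm φ (A \ B) := by
  simpa [phiNorm_eq_zero_of_finite hφ h] using phiNorm_le_inter_add_diff hφ A B

end phiNorm

lemma exists_eqOn_of_partition {α ι β : Type*} {P : ι → Set α}
    (hdisj : Pairwise (Function.onFun Disjoint P)) (hcover : (⋃ i, P i) = univ) (y : ι → β) :
    ∃ x : α → β, ∀ i, EqOn x (fun _ => y i) (P i) := by
  have hmem : ∀ a, ∃ i, a ∈ P i := fun a => mem_iUnion.mp (hcover ▸ mem_univ a)
  choose idx hidx using hmem
  refine ⟨fun a => y (idx a), fun i a ha => ?_⟩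
  by_contra hne
  exact disjoint_left.mp (hdisj fun h => hne (congrArg y h)) (hidx a) ha

lemma iLimitPoint_of_eqOn {X : Type*} [TopologicalSpace X] {I : Set (Set ℕ)} {x : ℕ → X}
    {A : Set ℕ} {c : X} (hA : A ∉ I) (hx : EqOn x (fun _ => c) A) : ILimitPoint I x c :=
  ⟨A, hA, tendsto_const_nhds.congr' <|
    mem_of_superset (mem_inf_of_right (mem_principal_self A)) fun _ hm => (hx hm).symm⟩

lemma finite_inter_of_tendsto_of_eqOn {X : Type*} [TopologicalSpace X] [T2Space X]
    {x : ℕ → X} {A S : Set ℕ} {c ℓ : X} (hA : Tendsto x (atTop ⊓ 𝓟 A) (𝓝 ℓ))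
    (hS : EqOn x (fun _ => c) S) (hc : c ≠ ℓ) : (A ∩ S).Finite := by
  by_contra hinf
  have : (atTop ⊓ 𝓟 (A ∩ S)).NeBot :=
    frequently_iff_neBot.mp (Nat.frequently_atTop_iff_infinite.mpr hinf)
  have hℓ : Tendsto x (atTop ⊓ 𝓟 (A ∩ S)) (𝓝 ℓ) :=
    hA.mono_left (inf_le_inf_left _ (principal_mono.mpr inter_subset_left))
  have hc' : Tendsto x (atTop ⊓ 𝓟 (A ∩ S)) (𝓝 c) :=
    tendsto_const_nhds.congr' <|
      mem_of_superset (mem_inf_of_right (mem_principal_self _)) fun _ hm => (hS hm.2).symm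
  exact hc (tendsto_nhds_unique hc' hℓ)

lemma not_iLimitPoint_of_eqOn_partition {X : Type*} [TopologicalSpace X] [T2Space X]
    {φ : Set ℕ → ℝ≥0∞} (hφ : IsLSCSubmeasure φ) {P : ℕ → Set ℕ} (hcover : (⋃ n, P n) = univ)
    (hlim : Tendsto (fun n => phiNorm φ (⋃ k > n, P k)) atTop (𝓝 0))
    {x y : ℕ → X} {ℓ : X} (hx : ∀ n, EqOn x (fun _ => y n) (P n)) (hne : ∀ n, y n ≠ ℓ) :
    ¬ ILimitPoint {A : Set ℕ | phiNorm φ A = 0} x ℓ := by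
  rintro ⟨A, hA, hAℓ⟩
  obtain ⟨N, hN⟩ := (hlim.eventually_lt_const (pos_iff_ne_zero.mpr hA)).exists
  have hhead : (A ∩ ⋃ k ∈ Iic N, P k).Finite := by
    rw [inter_iUnion₂]
    exact (finite_Iic N).biUnion fun k _ => finite_inter_of_tendsto_of_eqOn hAℓ (hx k) (hne k)
  have htail : A \ ⋃ k ∈ Iic N, P k ⊆ ⋃ k > N, P k := by
    rintro m ⟨-, hm⟩
    obtain ⟨k, hk⟩ := mem_iUnion.mp (hcover ▸ mem_univ m)
    exact mem_iUnion₂.mpr ⟨k, not_le.mp fun hkN => hm (mem_biUnion hkN hk), hk⟩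
  exact (((phiNorm_le_diff_of_finite_inter hφ hhead).trans (phiNorm_mono hφ htail)).trans_lt
    hN).false

theorem stmt10_general {X : Type*} [TopologicalSpace X]
    [T2Space X] (hconv : ∃ (y : ℕ → X) (ℓ : X), Tendsto y atTop (𝓝 ℓ) ∧ ∀ n, y n ≠ ℓ)
    (φ : Set ℕ → ℝ≥0∞) (hφ : IsLSCSubmeasure φ)
    (P : ℕ → Set ℕ) (hdisj : Pairwise (Function.onFun Disjoint P))
    (hcover : (⋃ n, P n) = Set.univ) (hpos : ∀ n, 0 < phiNorm φ (P n))
    (hlim : Tendsto (fun n => phiNorm φ (⋃ k > n, P k)) atTop (𝓝 0)) :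
    ∃ x : ℕ → X, ¬ IsClosed {ℓ : X | ILimitPoint {A : Set ℕ | phiNorm φ A = 0} x ℓ} := by
  obtain ⟨y, ℓ, hy, hne⟩ := hconv
  obtain ⟨x, hx⟩ := exists_eqOn_of_partition hdisj hcover y
  refine ⟨x, fun hclosed => ?_⟩
  have hyLim : ∀ n, ILimitPoint {A : Set ℕ | phiNorm φ A = 0} x (y n) :=
    fun n => iLimitPoint_of_eqOn (hpos n).ne' (hx n)
  exact not_iLimitPoint_of_eqOn_partition hφ hcover hlim hx hne
    (hclosed.mem_of_tendsto hy (Eventually.of_forall hyLim))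

/-- given a non-trivial convergent sequence in `X` and a partition
as in Statement 9, some sequence has a non-closed set of `I_φ`-limit points. -/
theorem stmt10 {X : Type*} [TopologicalSpace X] [FirstCountableTopology X]
    [T2Space X] (hconv : ∃ (y : ℕ → X) (ℓ : X), Tendsto y atTop (𝓝 ℓ) ∧ ∀ n, y n ≠ ℓ)
    (φ : Set ℕ → ℝ≥0∞) (hφ : IsLSCSubmeasure φ) (hfin : φ Set.univ < ⊤)
    (P : ℕ → Set ℕ) (hdisj : Pairwise (Function.onFun Disjoint P))
    (hcover : (⋃ n, P n) = Set.univ) (hpos : ∀ n, 0 < phiNorm φ (P n))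
    (hlim : Tendsto (fun n => phiNorm φ (⋃ k > n, P k)) atTop (𝓝 0)) :
    ∃ x : ℕ → X, ¬ IsClosed {ℓ : X | ILimitPoint {A : Set ℕ | phiNorm φ A = 0} x ℓ} :=
  stmt10_general hconv φ hφ P hdisj hcover hpos hlim
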